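/- Let G be a CRN with Hamiltonian H(x,p) = ∑_{(a,b)∈R} κ_{a,b} x^a (e^{⟨b−a,p⟩} − 1) and let c ∈ ℝ_{>0}^d. If V(x) = ∑ᵢ(xᵢ log(xᵢ/cᵢ) − xᵢ + cᵢ) satisfies H(x, ∇V(x)) = 0 for all x ∈ ℝ_{>0}^d, then c satisfies the complex-balance condition: for every complex z ∈ C, ∑_{a:(a,z)∈R} κ_{a,z} c^a = ∑_{b:(z,b)∈R} κ_{z,b} c^z. -/

import Mathlib

open Finset

noncomputable def crnH {d : ℕ} {ι : Type*} [Fintype ι]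
    (src tgt : ι → Fin d → ℕ) (κ : ι → ℝ) (x p : Fin d → ℝ) : ℝ :=
  ∑ i, κ i * (∏ j, x j ^ src i j) *
    (Real.exp (∑ j, ((tgt i j : ℝ) - (src i j : ℝ)) * p j) - 1)

/-!
Substituting `x = y * c`, the term `exp ⟨b - a, log (x / c)⟩` becomes `y^b / y^a`, so the
HJB identity says that the polynomial `∑ᵢ κᵢ c^{aᵢ} (y^{bᵢ} - y^{aᵢ})` vanishes on the positive
orthant. A polynomial vanishing on a product of infinite sets is zero, and its coefficient of
`y^z` is the inflow minus the outflow of the complex `z`, since distinct complexes give distinct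
monomials.
-/

open MvPolynomial

section BalancePolynomial

variable {σ ι R : Type*} [Fintype σ] [Fintype ι] [CommRing R]

noncomputable def balancePoly (src tgt : ι → σ → ℕ) (w : ι → R) : MvPolynomial σ R :=
  ∑ i, C (w i) * (monomial (Finsupp.equivFunOnFinite.symm (tgt i)) 1 -
    monomial (Finsupp.equivFunOnFinite.symm (src i)) 1)

omit [Fintype ι] in
lemma eval_monomial_equivFunOnFinite_symm (x : σ → R) (a : σ → ℕ) :
    eval x (monomial (Finsupp.equivFunOnFinite.symm a) (1 : R)) = ∏ j, x j ^ a j := by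
  rw [eval_monomial, one_mul, Finsupp.prod_pow]
  rfl

lemma eval_balancePoly (src tgt : ι → σ → ℕ) (w : ι → R) (x : σ → R) :
    eval x (balancePoly src tgt w) =
      ∑ i, w i * ((∏ j, x j ^ tgt i j) - ∏ j, x j ^ src i j) := by
  simp only [balancePoly, map_sum, map_mul, map_sub, eval_C,
    eval_monomial_equivFunOnFinite_symm]

lemma coeff_balancePoly [DecidableEq (σ → ℕ)] (src tgt : ι → σ → ℕ) (w : ι → R) (z : σ → ℕ) :
    coeff (Finsupp.equivFunOnFinite.symm z) (balancePoly src tgt w) =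
      ∑ i ∈ univ.filter (fun i => tgt i = z), w i -
        ∑ i ∈ univ.filter (fun i => src i = z), w i := by
  classical
  simp only [balancePoly, coeff_sum, coeff_C_mul, coeff_sub, coeff_monomial,
    EmbeddingLike.apply_eq_iff_eq, mul_sub, sum_sub_distrib, sum_filter, mul_ite, mul_one,
    mul_zero]

end BalancePolynomial

lemma Real.exp_sum_sub_mul_log {σ : Type*} [Fintype σ] (s t : σ → ℕ) {y : σ → ℝ}
    (hy : ∀ j, 0 < y j) :
    Real.exp (∑ j, ((t j : ℝ) - s j) * Real.log (y j)) =
      (∏ j, y j ^ t j) / ∏ j, y j ^ s j := by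
  rw [Real.exp_sum, ← prod_div_distrib]
  refine prod_congr rfl fun j _ => ?_
  rw [sub_mul, Real.exp_sub, Real.exp_nat_mul, Real.exp_nat_mul, Real.exp_log (hy j)]

lemma crnH_mul_log_div_eq_eval_balancePoly {d : ℕ} {ι : Type*} [Fintype ι]
    (src tgt : ι → Fin d → ℕ) (κ : ι → ℝ) {c y : Fin d → ℝ} (hc : ∀ j, c j ≠ 0)
    (hy : ∀ j, 0 < y j) :
    crnH src tgt κ (fun j => y j * c j) (fun j => Real.log (y j * c j / c j)) =
      eval y (balancePoly src tgt fun i => κ i * ∏ j, c j ^ src i j) := by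
  simp only [crnH, eval_balancePoly, mul_div_cancel_right₀ _ (hc _),
    Real.exp_sum_sub_mul_log _ _ hy]
  refine sum_congr rfl fun i _ => ?_
  have hys : (∏ j, y j ^ src i j) ≠ 0 := prod_ne_zero_iff.2 fun j _ => (pow_pos (hy j) _).ne'
  rw [prod_congr rfl fun j _ => mul_pow (y j) (c j) (src i j), prod_mul_distrib]
  field_simp

theorem hjb_implies_complex_balanced_general
    {d : ℕ} {ι : Type*} [Fintype ι] [DecidableEq (Fin d → ℕ)]
    (src tgt : ι → Fin d → ℕ) (κ : ι → ℝ)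
    (c : Fin d → ℝ) (hc : ∀ j, 0 < c j)
    (hhjb : ∀ x : Fin d → ℝ, (∀ j, 0 < x j) →
      crnH src tgt κ x (fun j => Real.log (x j / c j)) = 0) :
    ∀ z : Fin d → ℕ,
      ∑ i ∈ univ.filter (fun i => tgt i = z), κ i * ∏ j, c j ^ src i j =
      ∑ i ∈ univ.filter (fun i => src i = z), κ i * ∏ j, c j ^ z j := by
  intro z
  have hpoly : balancePoly src tgt (fun i => κ i * ∏ j, c j ^ src i j) = 0 :=
    funext_set (fun _ => Set.Ioi 0) (fun _ => Set.Ioi_infinite 0) fun y hy => by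
      have hy : ∀ j, 0 < y j := fun j => hy j trivial
      rw [← crnH_mul_log_div_eq_eval_balancePoly src tgt κ (fun j => (hc j).ne') hy, map_zero]
      exact hhjb _ fun j => mul_pos (hy j) (hc j)
  have hcoeff := congrArg (coeff (Finsupp.equivFunOnFinite.symm z)) hpoly
  rw [coeff_balancePoly, coeff_zero, sub_eq_zero] at hcoeff
  rw [hcoeff]
  exact sum_congr rfl fun i hi => by rw [(mem_filter.1 hi).2]

theorem hjb_implies_complex_balanced
    {d : ℕ} {ι : Type*} [Fintype ι] [DecidableEq (Fin d → ℕ)]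
    (src tgt : ι → Fin d → ℕ) (κ : ι → ℝ) (hκ : ∀ i, 0 < κ i)
    (c : Fin d → ℝ) (hc : ∀ j, 0 < c j)
    (hhjb : ∀ x : Fin d → ℝ, (∀ j, 0 < x j) →
      crnH src tgt κ x (fun j => Real.log (x j / c j)) = 0) :
    ∀ z : Fin d → ℕ,
      ∑ i ∈ univ.filter (fun i => tgt i = z), κ i * ∏ j, c j ^ src i j =
      ∑ i ∈ univ.filter (fun i => src i = z), κ i * ∏ j, c j ^ z j :=
  hjb_implies_complex_balanced_general src tgt κ c hc hhjb
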